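/- Tweedie's formula: let X be an ℝⁿ-valued random variable with distribution p_X, ε ~ N(0, σ²I) independent of X, and Z = X + ε with marginal density p_Z = p_X * N(0,σ²I). Then the conditional expectation ψ_σ(z) := E[X | Z = z] satisfies ψ_σ(z) = z + σ² ∇ log p_Z(z) for all z with p_Z(z) > 0. -/

import Mathlib

/-!
Both the Gaussian kernel `G` and its gradient `∇G(v) = -σ⁻² G(v) v` are bounded
(`‖v‖ e^{-‖v‖²/2σ²} ≤ σ`), so for a finite measure `μ` one may differentiate
`p_Z(w) = ∫ G(w - x) dμ(x)` under the integral sign with a constant dominating function: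
`∇p_Z(z) = σ⁻² ∫ G(z - x) (x - z) dμ(x) = σ⁻² p_Z(z) (ψ_σ(z) - z)`.
Dividing by `p_Z(z) > 0` gives the gradient of `log p_Z`.
-/

open scoped RealInnerProductSpace
open Filter Topology MeasureTheory

noncomputable section

/-- Density of the centered Gaussian `N(0, σ²I)` on `ℝⁿ`. -/
def gaussPdf (n : ℕ) (σ : ℝ) (v : EuclideanSpace ℝ (Fin n)) : ℝ :=
  (2 * Real.pi * σ ^ 2) ^ (-(n : ℝ) / 2) * Real.exp (-‖v‖ ^ 2 / (2 * σ ^ 2))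

/-- Marginal density of `Z = X + ε` where `X ~ μ` and `ε ~ N(0, σ²I)`. -/
def pZ (n : ℕ) (σ : ℝ) (μ : Measure (EuclideanSpace ℝ (Fin n)))
    (z : EuclideanSpace ℝ (Fin n)) : ℝ :=
  ∫ x, gaussPdf n σ (z - x) ∂μ

/-- MMSE denoiser `ψ_σ(z) = E[X | Z = z]`. -/
def mmse (n : ℕ) (σ : ℝ) (μ : Measure (EuclideanSpace ℝ (Fin n)))
    (z : EuclideanSpace ℝ (Fin n)) : EuclideanSpace ℝ (Fin n) :=
  (pZ n σ μ z)⁻¹ • ∫ x, gaussPdf n σ (z - x) • x ∂μ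

theorem HasGradientAt.log {F : Type*} [NormedAddCommGroup F] [InnerProductSpace ℝ F]
    [CompleteSpace F] {f : F → ℝ} {f' x : F} (hf : HasGradientAt f f' x) (hx : f x ≠ 0) :
    HasGradientAt (fun y => Real.log (f y)) ((f x)⁻¹ • f') x := by
  rw [hasGradientAt_iff_hasFDerivAt, map_smul]
  exact hf.hasFDerivAt.log hx

theorem Real.mul_exp_neg_sq_div_le {σ : ℝ} (hσ : 0 < σ) (t : ℝ) :
    t * Real.exp (-t ^ 2 / (2 * σ ^ 2)) ≤ σ := by
  set u := t ^ 2 / (2 * σ ^ 2)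
  have hamgm : t ≤ σ * (1 + u) := by
    have key : σ * (1 + u) - t = ((t - σ) ^ 2 + σ ^ 2) / (2 * σ) := by
      simp only [u]; field_simp; ring
    rw [← sub_nonneg, key]
    positivity
  calc t * Real.exp (-t ^ 2 / (2 * σ ^ 2)) ≤ σ * (1 + u) * Real.exp (-u) := by
        rw [neg_div]; gcongr
    _ ≤ σ * Real.exp u * Real.exp (-u) := by
        gcongr; linarith [Real.add_one_le_exp u]
    _ = σ := by rw [mul_assoc, ← Real.exp_add, add_neg_cancel, Real.exp_zero, mul_one]

section Gaussian

variable {n : ℕ} {σ : ℝ}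

@[fun_prop]
theorem continuous_gaussPdf : Continuous (gaussPdf n σ) := by
  unfold gaussPdf; fun_prop

theorem gaussPdf_nonneg (v : EuclideanSpace ℝ (Fin n)) : 0 ≤ gaussPdf n σ v := by
  unfold gaussPdf; positivity

theorem gaussPdf_le_gaussPdf_zero (v : EuclideanSpace ℝ (Fin n)) :
    gaussPdf n σ v ≤ gaussPdf n σ 0 := by
  unfold gaussPdf
  gcongr
  simp

theorem norm_gaussPdf_smul_le (hσ : 0 < σ) (v : EuclideanSpace ℝ (Fin n)) :
    ‖gaussPdf n σ v • v‖ ≤ σ * gaussPdf n σ 0 := by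
  rw [norm_smul, Real.norm_of_nonneg (gaussPdf_nonneg v)]
  simp only [gaussPdf, norm_zero, zero_pow two_ne_zero, neg_zero, zero_div, Real.exp_zero, mul_one]
  rw [mul_assoc, mul_comm (Real.exp _), mul_comm σ]
  gcongr
  exact Real.mul_exp_neg_sq_div_le hσ ‖v‖

theorem hasGradientAt_gaussPdf (v : EuclideanSpace ℝ (Fin n)) :
    HasGradientAt (gaussPdf n σ) (-(σ ^ 2)⁻¹ • gaussPdf n σ v • v) v := by
  have h := (((hasStrictFDerivAt_norm_sq v).hasFDerivAt.const_mul
      (-(2 * σ ^ 2)⁻¹)).exp).const_mul ((2 * Real.pi * σ ^ 2) ^ (-(n : ℝ) / 2))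
  have hG : gaussPdf n σ = fun y => (2 * Real.pi * σ ^ 2) ^ (-(n : ℝ) / 2) *
      Real.exp (-(2 * σ ^ 2)⁻¹ * ‖y‖ ^ 2) := by
    funext y; unfold gaussPdf; congr 2; ring
  rw [hasGradientAt_iff_hasFDerivAt, hG]
  refine h.congr_fderiv ?_
  ext w
  simp
  ring

end Gaussian

section Marginal

variable {n : ℕ} {σ : ℝ} (μ : Measure (EuclideanSpace ℝ (Fin n))) [IsFiniteMeasure μ]

theorem integrable_gaussPdf_sub (z : EuclideanSpace ℝ (Fin n)) :
    Integrable (fun x => gaussPdf n σ (z - x)) μ :=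
  .of_bound (by fun_prop) (gaussPdf n σ 0) <|
    ae_of_all _ fun x => by
      rw [Real.norm_of_nonneg (gaussPdf_nonneg _)]; exact gaussPdf_le_gaussPdf_zero _

theorem integrable_gaussPdf_sub_smul (hσ : 0 < σ) (z : EuclideanSpace ℝ (Fin n)) :
    Integrable (fun x => gaussPdf n σ (z - x) • (z - x)) μ :=
  .of_bound (by fun_prop) (σ * gaussPdf n σ 0) <|
    ae_of_all _ fun x => norm_gaussPdf_smul_le hσ _

theorem hasGradientAt_pZ (hσ : 0 < σ) (z : EuclideanSpace ℝ (Fin n)) :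
    HasGradientAt (pZ n σ μ) (-(σ ^ 2)⁻¹ • ∫ x, gaussPdf n σ (z - x) • (z - x) ∂μ) z := by
  set G' := fun w x => InnerProductSpace.toDual ℝ _ (-(σ ^ 2)⁻¹ • gaussPdf n σ (w - x) • (w - x))
  have hderiv : ∀ x w, HasFDerivAt (fun y => gaussPdf n σ (y - x)) (G' w x) w := fun x w => by
    have := (hasGradientAt_gaussPdf (σ := σ) (w - x)).hasFDerivAt.comp w
      ((hasFDerivAt_id w).sub_const x)
    rwa [ContinuousLinearMap.comp_id] at this
  have hbound : ∀ x w, ‖G' w x‖ ≤ (σ ^ 2)⁻¹ * (σ * gaussPdf n σ 0) := fun x w => by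
    rw [LinearIsometryEquiv.norm_map, norm_smul, norm_neg, norm_inv,
      Real.norm_of_nonneg (by positivity)]
    gcongr
    exact norm_gaussPdf_smul_le hσ _
  have h := hasFDerivAt_integral_of_dominated_of_fderiv_le (x₀ := z) univ_mem
    (.of_forall fun w => (integrable_gaussPdf_sub μ w).aestronglyMeasurable)
    (integrable_gaussPdf_sub μ z) (by fun_prop) (ae_of_all _ fun x w _ => hbound x w)
    (integrable_const _) (ae_of_all _ fun x w _ => hderiv x w)
  rw [hasGradientAt_iff_hasFDerivAt]
  refine h.congr_fderiv ?_
  rw [← integral_smul]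
  exact (innerSL ℝ).integral_comp_comm ((integrable_gaussPdf_sub_smul μ hσ z).smul (-(σ ^ 2)⁻¹))

theorem integral_gaussPdf_sub_smul (hσ : 0 < σ) {z : EuclideanSpace ℝ (Fin n)}
    (hz : pZ n σ μ z ≠ 0) :
    ∫ x, gaussPdf n σ (z - x) • (z - x) ∂μ = pZ n σ μ z • (z - mmse n σ μ z) := by
  have hx : Integrable (fun x => gaussPdf n σ (z - x) • x) μ := by
    refine (((integrable_gaussPdf_sub (σ := σ) μ z).smul_const z).sub
      (integrable_gaussPdf_sub_smul μ hσ z)).congr (ae_of_all _ fun x => ?_)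
    simp only [Pi.sub_apply, smul_sub, sub_sub_cancel]
  calc ∫ x, gaussPdf n σ (z - x) • (z - x) ∂μ
      = ∫ x, (gaussPdf n σ (z - x) • z - gaussPdf n σ (z - x) • x) ∂μ := by simp_rw [smul_sub]
    _ = pZ n σ μ z • z - ∫ x, gaussPdf n σ (z - x) • x ∂μ := by
        rw [integral_sub ((integrable_gaussPdf_sub (σ := σ) μ z).smul_const z) hx,
          integral_smul_const, pZ]
    _ = pZ n σ μ z • (z - mmse n σ μ z) := by rw [smul_sub, mmse, smul_inv_smul₀ hz]

end Marginal

theorem stmt_7_general {n : ℕ} (σ : ℝ) (hσ : 0 < σ)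
    (μ : Measure (EuclideanSpace ℝ (Fin n))) [IsProbabilityMeasure μ] :
    ∀ z, 0 < pZ n σ μ z →
      HasGradientAt (fun w => Real.log (pZ n σ μ w))
        ((1 / σ ^ 2) • (mmse n σ μ z - z)) z := by
  intro z hz
  have h := (hasGradientAt_pZ μ hσ z).log hz.ne'
  rw [integral_gaussPdf_sub_smul μ hσ hz.ne', smul_comm, inv_smul_smul₀ hz.ne'] at h
  convert h using 1
  module

/-- Tweedie's formula: `ψ_σ(z) = z + σ² ∇ log p_Z(z)` wherever `p_Z(z) > 0`. -/
theorem stmt_7 {n : ℕ} (σ : ℝ) (hσ : 0 < σ)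
    (μ : Measure (EuclideanSpace ℝ (Fin n))) [IsProbabilityMeasure μ]
    (hmom : Integrable (fun x => x) μ) :
    ∀ z, 0 < pZ n σ μ z →
      HasGradientAt (fun w => Real.log (pZ n σ μ w))
        ((1 / σ ^ 2) • (mmse n σ μ z - z)) z :=
  stmt_7_general σ hσ μ
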